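/- Let u = (u_0, …, u_{N−1}) ⊂ ℝ be a scalar sequence that is persistently exciting of order L + n, and let {(u_t, y_t)} be a trajectory of a controllable LTI system (A,B,C,D) of order n. Then the stacked matrix [H_L(u); H_L(y)] has rank L + n. -/
import Mathlib

open Matrix Finset

-- right kernel trivial from full column rank
private lemma kerR {m r : Type*} [Fintype m] [Fintype r] (M : Matrix m r ℝ)
    (h : M.rank = Fintype.card r) (v : r → ℝ) (hv : M.mulVec v = 0) : v = 0 := by
  have hrn := LinearMap.finrank_range_add_finrank_ker M.mulVecLin
  rw [Matrix.rank] at h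
  rw [h] at hrn
  simp [Module.finrank_fintype_fun_eq_card] at hrn
  have hker : v ∈ LinearMap.ker M.mulVecLin := by simpa [Matrix.mulVecLin] using hv
  rw [hrn] at hker
  simpa using hker

-- left kernel trivial from full row rank
private lemma kerL {m r : Type*} [Fintype m] [Fintype r] (M : Matrix m r ℝ)
    (h : M.rank = Fintype.card m) (v : m → ℝ) (hv : ∀ j, ∑ i, v i * M i j = 0) : v = 0 := by
  apply kerR Mᵀ (by rw [Matrix.rank_transpose]; exact h) v
  funext j
  simpa [Matrix.mulVec, dotProduct, mul_comm] using hv j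

-- full row rank from left kernel trivial
private lemma rankFull {m r : Type*} [Fintype m] [Fintype r] (M : Matrix m r ℝ)
    (hv : ∀ v : m → ℝ, (∀ j, ∑ i, v i * M i j = 0) → v = 0) :
    M.rank = Fintype.card m := by
  rw [← Matrix.rank_transpose, Matrix.rank]
  rw [LinearMap.finrank_range_of_inj]
  · simp [Module.finrank_fintype_fun_eq_card]
  · rw [← LinearMap.ker_eq_bot, eq_bot_iff]
    intro v hvk
    have h0 : Mᵀ.mulVec v = 0 := hvk
    have := hv v (fun j => by
      have := congrFun h0 j
      simpa [Matrix.mulVec, dotProduct, mul_comm] using this)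
    simpa using this

private lemma rankMulLeft {a b c : Type*} [Fintype a] [Fintype b] [Fintype c]
    (P : Matrix a b ℝ) (Q : Matrix b c ℝ)
    (hP : Function.Injective P.mulVecLin) : (P * Q).rank = Q.rank := by
  rw [Matrix.rank, Matrix.rank, Matrix.mulVecLin_mul, LinearMap.range_comp]
  exact (LinearEquiv.finrank_eq (Submodule.equivMapOfInjective _ hP _)).symm

private lemma stateExpand {n : ℕ} (A : Matrix (Fin n) (Fin n) ℝ) (B : Fin n → ℝ)
    (u : ℕ → ℝ) (x : ℕ → Fin n → ℝ)
    (hx : ∀ t, x (t + 1) = A.mulVec (x t) + u t • B) :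
    ∀ i j, x (j + i) = (A ^ i).mulVec (x j)
      + ∑ m ∈ Finset.range i, u (j + m) • (A ^ (i - 1 - m)).mulVec B := by
  intro i
  induction i with
  | zero => intro j; simp [Matrix.mulVec_one]
  | succ i ih =>
    intro j
    have h1 : j + (i + 1) = (j + i) + 1 := by ring
    rw [h1, hx, ih j]
    rw [Matrix.mulVec_add, Matrix.mulVec_mulVec]
    have hA : A * A ^ i = A ^ (i + 1) := by rw [pow_succ']
    rw [hA, Finset.sum_range_succ]
    have hmv : A *ᵥ ∑ m ∈ range i, u (j + m) • A ^ (i - 1 - m) *ᵥ B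
        = ∑ m ∈ range i, A *ᵥ (u (j + m) • A ^ (i - 1 - m) *ᵥ B) :=
      map_sum (Matrix.mulVecLin A) _ _
    rw [hmv]
    have hsum : ∑ m ∈ range i, A *ᵥ (u (j + m) • A ^ (i - 1 - m) *ᵥ B)
        = ∑ m ∈ range i, u (j + m) • A ^ (i + 1 - 1 - m) *ᵥ B := by
      apply Finset.sum_congr rfl
      intro m hm
      rw [Finset.mem_range] at hm
      have he : i + 1 - 1 - m = (i - 1 - m) + 1 := by omega
      rw [he, pow_succ', Matrix.mulVec_smul, Matrix.mulVec_mulVec]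
    rw [hsum]
    have he2 : i + 1 - 1 - i = 0 := by omega
    rw [he2, pow_zero, Matrix.one_mulVec]
    abel

private lemma chSum {n : ℕ} (A : Matrix (Fin n) (Fin n) ℝ) :
    ∑ s ∈ Finset.range (n + 1), A.charpoly.coeff s • A ^ s = 0 := by
  have h := Matrix.aeval_self_charpoly A
  rw [Polynomial.aeval_eq_sum_range' (n := n + 1)] at h
  · simpa using h
  · rw [Matrix.charpoly_natDegree_eq_dim]
    simp

private lemma dotSum {n : ℕ} (C : Fin n → ℝ) {ι : Type*} (t : Finset ι) (f : ι → Fin n → ℝ) :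
    C ⬝ᵥ (∑ m ∈ t, f m) = ∑ m ∈ t, C ⬝ᵥ f m := by
  simp only [dotProduct, Finset.sum_apply, Finset.mul_sum]
  rw [Finset.sum_comm]

private lemma sumMulVec {n : ℕ} {ι : Type*} (t : Finset ι) (M : ι → Matrix (Fin n) (Fin n) ℝ)
    (v : Fin n → ℝ) : (∑ s ∈ t, M s).mulVec v = ∑ s ∈ t, (M s).mulVec v := by
  funext i
  simp only [Matrix.mulVec, dotProduct, Finset.sum_apply, Matrix.sum_apply,
    Finset.sum_mul]
  rw [Finset.sum_comm]

private lemma sliceS1 {L n : ℕ} (ξ : ℕ → ℝ) (hξ : ∀ i, L ≤ i → ξ i = 0) (u : ℕ → ℝ)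
    (j s : ℕ) (hs : s ≤ n) :
    ∑ k ∈ Finset.range (L + n), (if s ≤ k then ξ (k - s) else 0) * u (k + j)
      = ∑ i ∈ Finset.range L, ξ i * u (i + (j + s)) := by
  conv_lhs => rw [Finset.range_eq_Ico]
  rw [← Finset.sum_Ico_consecutive _ (Nat.zero_le s) (by omega : s ≤ L + n)]
  have h1 : ∑ k ∈ Finset.Ico 0 s, (if s ≤ k then ξ (k - s) else 0) * u (k + j) = 0 :=
    Finset.sum_eq_zero fun k hk => by
      rw [Finset.mem_Ico] at hk
      rw [if_neg (by omega), zero_mul]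
  rw [h1, zero_add,
    ← Finset.sum_Ico_consecutive _ (by omega : s ≤ s + L) (by omega : s + L ≤ L + n)]
  have h2 : ∑ k ∈ Finset.Ico (s + L) (L + n),
      (if s ≤ k then ξ (k - s) else 0) * u (k + j) = 0 :=
    Finset.sum_eq_zero fun k hk => by
      rw [Finset.mem_Ico] at hk
      rw [if_pos (by omega), hξ _ (by omega), zero_mul]
  rw [h2, add_zero, Finset.sum_Ico_eq_sum_range]
  rw [show s + L - s = L from by omega]
  refine Finset.sum_congr rfl fun i hi => ?_
  rw [if_pos (by omega), show s + i - s = i from by omega,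
    show s + i + j = i + (j + s) from by omega]

private lemma sliceS2 {L n : ℕ} (g : ℕ → ℝ) (u : ℕ → ℝ) (j s : ℕ) (hs : s ≤ n) :
    ∑ k ∈ Finset.range (L + n), (if k < s then g k else 0) * u (k + j)
      = ∑ m ∈ Finset.range s, u (j + m) * g m := by
  rw [← Finset.sum_subset (Finset.range_subset_range.2 (by omega : s ≤ L + n))
    (fun k _ hk => by
      rw [Finset.mem_range, not_lt] at hk
      rw [if_neg (by omega), zero_mul])]
  refine Finset.sum_congr rfl fun m hm => ?_
  rw [Finset.mem_range] at hm
  rw [if_pos hm, mul_comm, show m + j = j + m from by omega]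

/-- The (scalar) Hankel matrix of order `L` with `K` columns built from a
sequence `z`, with entry `z (i + j)`. -/
def hankelMatrix (L K : ℕ) (z : ℕ → ℝ) : Matrix (Fin L) (Fin K) ℝ :=
  Matrix.of fun i j => z ((i : ℕ) + (j : ℕ))

/-- Willems' fundamental lemma (rank form, van Waarde et al.): for a minimal
SISO LTI system of order `n` and an input persistently exciting of order
`L + n` (with `n ≤ L`), the stacked input-output Hankel matrix has rank
`L + n`. -/
theorem stmt_15 {n N L : ℕ} (hnL : n ≤ L) (hLN : L + n ≤ N)
    (A : Matrix (Fin n) (Fin n) ℝ) (B C : Fin n → ℝ) (D : ℝ)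
    (hctrb : (Matrix.of fun (i j : Fin n) => (A ^ (j : ℕ)).mulVec B i).rank = n)
    (hobsv : (Matrix.of fun (i j : Fin n) => C ⬝ᵥ (A ^ (i : ℕ)).mulVec
      (Pi.single j 1)).rank = n)
    (u y : ℕ → ℝ) (x : ℕ → Fin n → ℝ)
    (hx : ∀ t, x (t + 1) = A.mulVec (x t) + u t • B)
    (hy : ∀ t, y t = C ⬝ᵥ x t + D * u t)
    (hPE : (hankelMatrix (L + n) (N - (L + n) + 1) u).rank = L + n) :
    (Matrix.of fun (r : Fin L ⊕ Fin L) (j : Fin (N - L + 1)) =>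
      Sum.elim (fun i : Fin L => u ((i : ℕ) + (j : ℕ)))
               (fun i : Fin L => y ((i : ℕ) + (j : ℕ))) r).rank = L + n := by
  set K := N - L + 1 with hK
  -- the state-trajectory matrix
  set Q : Matrix (Fin L ⊕ Fin n) (Fin K) ℝ :=
    Matrix.of fun r j => Sum.elim (fun i : Fin L => u ((i : ℕ) + (j : ℕ)))
      (fun r : Fin n => x (j : ℕ) r) r with hQdef
  -- the structured multiplier [[I,0],[T,Γ]]
  set P : Matrix (Fin L ⊕ Fin L) (Fin L ⊕ Fin n) ℝ :=
    Matrix.of fun r c =>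
      Sum.elim
        (fun i : Fin L => Sum.elim
          (fun m : Fin L => if i = m then (1:ℝ) else 0)
          (fun _ : Fin n => (0:ℝ)) c)
        (fun i : Fin L => Sum.elim
          (fun m : Fin L => if (m : ℕ) < (i : ℕ)
            then C ⬝ᵥ (A ^ ((i : ℕ) - 1 - (m : ℕ))).mulVec B
            else if (m : ℕ) = (i : ℕ) then D else 0)
          (fun r : Fin n => C ⬝ᵥ (A ^ (i : ℕ)).mulVec (Pi.single r 1)) c) r
      with hPdef
  have key : (Matrix.of fun (r : Fin L ⊕ Fin L) (j : Fin K) =>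
      Sum.elim (fun i : Fin L => u ((i : ℕ) + (j : ℕ)))
               (fun i : Fin L => y ((i : ℕ) + (j : ℕ))) r) = P * Q := by
    ext r j
    cases r with
    | inl i =>
      rw [Matrix.mul_apply]
      rw [Fintype.sum_sum_type]
      simp only [hPdef, hQdef, Matrix.of_apply, Sum.elim_inl, Sum.elim_inr]
      simp [Finset.sum_ite_eq]
    | inr i =>
      rw [Matrix.mul_apply]
      rw [Fintype.sum_sum_type]
      simp only [hPdef, hQdef, Matrix.of_apply, Sum.elim_inl, Sum.elim_inr]
      -- the Γ-part
      have hGamma : ∑ r : Fin n, (C ⬝ᵥ (A ^ (i : ℕ)).mulVec (Pi.single r 1)) * x (j : ℕ) r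
          = C ⬝ᵥ ((A ^ (i : ℕ)).mulVec (x (j : ℕ))) := by
        have h1 : ∀ r : Fin n, C ⬝ᵥ (A ^ (i : ℕ)).mulVec (Pi.single r 1)
            = (C ᵥ* (A ^ (i : ℕ))) r := by
          intro r
          rw [Matrix.dotProduct_mulVec, dotProduct_single, mul_one]
        calc ∑ r : Fin n, (C ⬝ᵥ (A ^ (i : ℕ)).mulVec (Pi.single r 1)) * x (j : ℕ) r
            = ∑ r : Fin n, (C ᵥ* (A ^ (i : ℕ))) r * x (j : ℕ) r := by
              exact Finset.sum_congr rfl (fun r _ => by rw [h1 r])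
          _ = (C ᵥ* (A ^ (i : ℕ))) ⬝ᵥ x (j : ℕ) := rfl
          _ = C ⬝ᵥ ((A ^ (i : ℕ)).mulVec (x (j : ℕ))) := (Matrix.dotProduct_mulVec _ _ _).symm
      -- the Toeplitz part
      have hT : ∑ m : Fin L, (if (m : ℕ) < (i : ℕ)
            then C ⬝ᵥ (A ^ ((i : ℕ) - 1 - (m : ℕ))).mulVec B
            else if (m : ℕ) = (i : ℕ) then D else 0) * u ((m : ℕ) + (j : ℕ))
          = (∑ m ∈ Finset.range (i : ℕ),
              (C ⬝ᵥ (A ^ ((i : ℕ) - 1 - m)).mulVec B) * u (m + (j : ℕ)))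
            + D * u ((i : ℕ) + (j : ℕ)) := by
        rw [Fin.sum_univ_eq_sum_range (fun m => (if m < (i : ℕ)
            then C ⬝ᵥ (A ^ ((i : ℕ) - 1 - m)).mulVec B
            else if m = (i : ℕ) then D else 0) * u (m + (j : ℕ))) L]
        rw [← Finset.sum_subset (Finset.range_subset_range.2 (Nat.succ_le_of_lt i.isLt))
          (by intro k _ hk
              rw [Finset.mem_range, not_lt] at hk
              rw [if_neg (by omega), if_neg (by omega), zero_mul])]
        rw [Finset.sum_range_succ, if_neg (lt_irrefl _), if_pos rfl]
        congr 1
        exact Finset.sum_congr rfl (fun m hm => by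
          rw [Finset.mem_range] at hm
          rw [if_pos hm])
      rw [hGamma, hT, hy]
      have hxe : x ((i : ℕ) + (j : ℕ)) = (A ^ (i : ℕ)).mulVec (x (j : ℕ))
          + ∑ m ∈ Finset.range (i : ℕ),
              u ((j : ℕ) + m) • (A ^ ((i : ℕ) - 1 - m)).mulVec B := by
        rw [Nat.add_comm (i : ℕ) (j : ℕ)]
        exact stateExpand A B u x hx (i : ℕ) (j : ℕ)
      have hds : C ⬝ᵥ (∑ m ∈ Finset.range (i : ℕ),
          u ((j : ℕ) + m) • (A ^ ((i : ℕ) - 1 - m)).mulVec B)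
          = ∑ m ∈ Finset.range (i : ℕ),
            C ⬝ᵥ (u ((j : ℕ) + m) • (A ^ ((i : ℕ) - 1 - m)).mulVec B) := by
        simp only [dotProduct, Finset.sum_apply, Finset.mul_sum]
        rw [Finset.sum_comm]
      rw [hxe, dotProduct_add, hds]
      have hcs : ∀ m ∈ Finset.range (i : ℕ),
          C ⬝ᵥ (u ((j : ℕ) + m) • (A ^ ((i : ℕ) - 1 - m)).mulVec B)
          = (C ⬝ᵥ (A ^ ((i : ℕ) - 1 - m)).mulVec B) * u (m + (j : ℕ)) := by
        intro m _
        rw [dotProduct_smul, smul_eq_mul, Nat.add_comm (j : ℕ) m, mul_comm]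
      rw [Finset.sum_congr rfl hcs]
      ring
  have hP : Function.Injective P.mulVecLin := by
    rw [← LinearMap.ker_eq_bot, eq_bot_iff]
    intro w hw
    have h0 : P.mulVec w = 0 := hw
    have htop : ∀ i : Fin L, w (Sum.inl i) = 0 := by
      intro i
      have := congrFun h0 (Sum.inl i)
      rw [Matrix.mulVec, Pi.zero_apply] at this
      rw [show ((fun c => P (Sum.inl i) c) ⬝ᵥ w) = ∑ c, P (Sum.inl i) c * w c from rfl,
        Fintype.sum_sum_type] at this
      simp only [hPdef, Matrix.of_apply, Sum.elim_inl, Sum.elim_inr, ite_mul, one_mul,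
        zero_mul, Finset.sum_ite_eq, Finset.mem_univ, if_true, Finset.sum_const_zero,
        add_zero] at this
      exact this
    have hbot : (Matrix.of fun (i j : Fin n) => C ⬝ᵥ (A ^ (i : ℕ)).mulVec
        (Pi.single j 1)).mulVec (fun r => w (Sum.inr r)) = 0 := by
      funext i
      have hi' : (i : ℕ) < L := lt_of_lt_of_le i.isLt hnL
      have := congrFun h0 (Sum.inr (⟨(i : ℕ), hi'⟩ : Fin L))
      rw [Matrix.mulVec, Pi.zero_apply] at this
      rw [show ((fun c => P (Sum.inr (⟨(i : ℕ), hi'⟩ : Fin L)) c) ⬝ᵥ w)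
          = ∑ c, P (Sum.inr (⟨(i : ℕ), hi'⟩ : Fin L)) c * w c from rfl,
        Fintype.sum_sum_type] at this
      simp only [hPdef, Matrix.of_apply, Sum.elim_inl, Sum.elim_inr] at this
      rw [Finset.sum_congr rfl (fun m (_ : m ∈ Finset.univ) => by
          rw [htop m, mul_zero]), Finset.sum_const_zero, zero_add] at this
      exact this
    have hw2 : (fun r => w (Sum.inr r)) = 0 :=
      kerR _ (by simpa using hobsv) _ hbot
    rw [Submodule.mem_bot]
    funext c
    cases c with
    | inl i => exact htop i
    | inr r => exact congrFun hw2 r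
  have hQ : Q.rank = L + n := by
    have hfull := rankFull Q ?_
    · simpa using hfull
    intro v hv
    set ξ : ℕ → ℝ := fun i => if h : i < L then v (Sum.inl ⟨i, h⟩) else 0 with hξdef
    set η : Fin n → ℝ := fun r => v (Sum.inr r) with hηdef
    set c : ℕ → ℝ := fun s => A.charpoly.coeff s with hcdef
    have hc : c n = 1 := by
      have h1 := (Matrix.charpoly_monic A).coeff_natDegree
      rwa [Matrix.charpoly_natDegree_eq_dim, Fintype.card_fin] at h1
    have hξpad : ∀ i, L ≤ i → ξ i = 0 := by
      intro i hi
      simp only [hξdef]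
      rw [dif_neg (by omega)]
    -- the kernel relation, in ℕ form
    have Hrel : ∀ j : ℕ, j ≤ N - L →
        (∑ i ∈ Finset.range L, ξ i * u (i + j)) + η ⬝ᵥ x j = 0 := by
      intro j hj
      have hjK : j < K := by omega
      have h0 := hv ⟨j, hjK⟩
      rw [Fintype.sum_sum_type] at h0
      simp only [hQdef, Matrix.of_apply, Sum.elim_inl, Sum.elim_inr] at h0
      have h1 : ∑ i ∈ Finset.range L, ξ i * u (i + j)
          = ∑ i : Fin L, v (Sum.inl i) * u ((i : ℕ) + j) := by
        rw [← Fin.sum_univ_eq_sum_range (fun i => ξ i * u (i + j)) L]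
        refine Finset.sum_congr rfl fun i _ => ?_
        simp only [hξdef]
        rw [dif_pos i.isLt, Fin.eta]
      rw [h1]
      exact h0
    -- the shifted relation
    have star : ∀ s, s ≤ n → ∀ j, j + s ≤ N - L →
        (∑ i ∈ Finset.range L, ξ i * u (i + (j + s)))
          + η ⬝ᵥ ((A ^ s).mulVec (x j))
          + ∑ m ∈ Finset.range s, u (j + m) * (η ⬝ᵥ (A ^ (s - 1 - m)).mulVec B) = 0 := by
      intro s hs j hj
      have h0 := Hrel (j + s) hj
      rw [stateExpand A B u x hx s j, dotProduct_add, dotSum] at h0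
      have h1 : ∀ m ∈ Finset.range s,
          η ⬝ᵥ (u (j + m) • (A ^ (s - 1 - m)).mulVec B)
          = u (j + m) * (η ⬝ᵥ (A ^ (s - 1 - m)).mulVec B) := by
        intro m _
        rw [dotProduct_smul, smul_eq_mul]
      rw [Finset.sum_congr rfl h1] at h0
      linarith
    -- Cayley-Hamilton consequence
    have hCH : ∀ j : ℕ,
        ∑ s ∈ Finset.range (n + 1), c s * (η ⬝ᵥ (A ^ s).mulVec (x j)) = 0 := by
      intro j
      have h1 : (∑ s ∈ Finset.range (n + 1), A.charpoly.coeff s • A ^ s).mulVec (x j)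
          = 0 := by
        rw [chSum A, Matrix.zero_mulVec]
      rw [sumMulVec] at h1
      have h2 : ∑ s ∈ Finset.range (n + 1), c s * (η ⬝ᵥ (A ^ s).mulVec (x j))
          = η ⬝ᵥ ∑ s ∈ Finset.range (n + 1), (A.charpoly.coeff s • A ^ s).mulVec (x j) := by
        rw [dotSum]
        refine Finset.sum_congr rfl fun s _ => ?_
        rw [Matrix.smul_mulVec, dotProduct_smul, smul_eq_mul]
      rw [h2, h1, dotProduct_zero]
    -- the left-annihilator of the deep Hankel matrix
    set w : ℕ → ℝ := fun k =>
      ∑ s ∈ Finset.range (n + 1), c s * ((if s ≤ k then ξ (k - s) else 0)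
        + (if k < s then η ⬝ᵥ (A ^ (s - 1 - k)).mulVec B else 0)) with hwdef
    have hW : ∀ j, j ≤ N - (L + n) →
        ∑ k ∈ Finset.range (L + n), w k * u (k + j) = 0 := by
      intro j hj
      have hswap : ∑ k ∈ Finset.range (L + n), w k * u (k + j)
          = ∑ s ∈ Finset.range (n + 1),
              c s * ((∑ i ∈ Finset.range L, ξ i * u (i + (j + s)))
                + ∑ m ∈ Finset.range s, u (j + m) * (η ⬝ᵥ (A ^ (s - 1 - m)).mulVec B)) := by
        calc ∑ k ∈ Finset.range (L + n), w k * u (k + j)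
            = ∑ k ∈ Finset.range (L + n), ∑ s ∈ Finset.range (n + 1),
                (c s * ((if s ≤ k then ξ (k - s) else 0)
                  + (if k < s then η ⬝ᵥ (A ^ (s - 1 - k)).mulVec B else 0))) * u (k + j) := by
              refine Finset.sum_congr rfl fun k _ => ?_
              simp only [hwdef]
              rw [Finset.sum_mul]
          _ = ∑ s ∈ Finset.range (n + 1), ∑ k ∈ Finset.range (L + n),
                (c s * ((if s ≤ k then ξ (k - s) else 0)
                  + (if k < s then η ⬝ᵥ (A ^ (s - 1 - k)).mulVec B else 0))) * u (k + j) :=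
              Finset.sum_comm
          _ = _ := by
              refine Finset.sum_congr rfl fun s hs => ?_
              rw [Finset.mem_range] at hs
              have hs' : s ≤ n := by omega
              have hterm : ∀ k ∈ Finset.range (L + n),
                  (c s * ((if s ≤ k then ξ (k - s) else 0)
                    + (if k < s then η ⬝ᵥ (A ^ (s - 1 - k)).mulVec B else 0))) * u (k + j)
                  = c s * ((if s ≤ k then ξ (k - s) else 0) * u (k + j))
                    + c s * ((if k < s then η ⬝ᵥ (A ^ (s - 1 - k)).mulVec B else 0) * u (k + j)) := by
                intro k _
                ring
              rw [Finset.sum_congr rfl hterm, Finset.sum_add_distrib,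
                ← Finset.mul_sum, ← Finset.mul_sum,
                sliceS1 ξ hξpad u j s hs',
                sliceS2 (fun k => η ⬝ᵥ (A ^ (s - 1 - k)).mulVec B) u j s hs',
                ← mul_add]
      rw [hswap]
      have hterm : ∀ s ∈ Finset.range (n + 1),
          c s * ((∑ i ∈ Finset.range L, ξ i * u (i + (j + s)))
            + ∑ m ∈ Finset.range s, u (j + m) * (η ⬝ᵥ (A ^ (s - 1 - m)).mulVec B))
          = -(c s * (η ⬝ᵥ (A ^ s).mulVec (x j))) := by
        intro s hs
        rw [Finset.mem_range] at hs
        have hst := star s (by omega) j (by omega)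
        have h1 : (∑ i ∈ Finset.range L, ξ i * u (i + (j + s)))
            + ∑ m ∈ Finset.range s, u (j + m) * (η ⬝ᵥ (A ^ (s - 1 - m)).mulVec B)
            = -(η ⬝ᵥ (A ^ s).mulVec (x j)) := by linarith
        rw [h1]
        ring
      rw [Finset.sum_congr rfl hterm, Finset.sum_neg_distrib, hCH j, neg_zero]
    -- conclude w vanishes on the window
    have hw0 : ∀ k, k < L + n → w k = 0 := by
      have hker := kerL (hankelMatrix (L + n) (N - (L + n) + 1) u)
        (by simpa using hPE) (fun k : Fin (L + n) => w k) ?_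
      · intro k hk
        exact congrFun hker ⟨k, hk⟩
      intro jF
      have h1 : ∑ i : Fin (L + n), w i * hankelMatrix (L + n) (N - (L + n) + 1) u i jF
          = ∑ k ∈ Finset.range (L + n), w k * u (k + (jF : ℕ)) := by
        rw [← Fin.sum_univ_eq_sum_range (fun k => w k * u (k + (jF : ℕ))) (L + n)]
        rfl
      rw [h1]
      exact hW (jF : ℕ) (by omega)
    -- extract ξ = 0
    have E1 : ∀ m, m < L → ξ (L - 1 - m) = 0 := by
      intro m
      induction m using Nat.strong_induction_on with
      | _ m ih =>
        intro hm
        have hk := hw0 (n + (L - 1 - m)) (by omega)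
        simp only [hwdef] at hk
        rw [Finset.sum_range_succ] at hk
        have hz : ∀ s ∈ Finset.range n,
            c s * ((if s ≤ n + (L - 1 - m) then ξ (n + (L - 1 - m) - s) else 0)
              + (if n + (L - 1 - m) < s then η ⬝ᵥ (A ^ (s - 1 - (n + (L - 1 - m)))).mulVec B
                 else 0)) = 0 := by
          intro s hs
          rw [Finset.mem_range] at hs
          rw [if_neg (by omega : ¬ (n + (L - 1 - m) < s)), add_zero,
            if_pos (by omega : s ≤ n + (L - 1 - m))]
          rcases le_or_gt (n - s) m with hcase | hcase
          · rw [show n + (L - 1 - m) - s = L - 1 - (m - (n - s)) from by omega,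
              ih (m - (n - s)) (by omega) (by omega), mul_zero]
          · rw [hξpad _ (by omega), mul_zero]
        rw [Finset.sum_eq_zero hz, zero_add,
          if_pos (Nat.le_add_right n _), if_neg (by omega), add_zero,
          show n + (L - 1 - m) - n = L - 1 - m from by omega, hc, one_mul] at hk
        exact hk
    have hξ0 : ∀ i, ξ i = 0 := by
      intro i
      by_cases hi : i < L
      · have := E1 (L - 1 - i) (by omega)
        rwa [show L - 1 - (L - 1 - i) = i from by omega] at this
      · exact hξpad i (by omega)
    -- extract the Markov parameters
    have E2 : ∀ d, d < n → η ⬝ᵥ (A ^ d).mulVec B = 0 := by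
      intro d
      induction d using Nat.strong_induction_on with
      | _ d ih =>
        intro hd
        have hk := hw0 (n - 1 - d) (by omega)
        simp only [hwdef] at hk
        rw [Finset.sum_range_succ] at hk
        have hz : ∀ s ∈ Finset.range n,
            c s * ((if s ≤ n - 1 - d then ξ (n - 1 - d - s) else 0)
              + (if n - 1 - d < s then η ⬝ᵥ (A ^ (s - 1 - (n - 1 - d))).mulVec B
                 else 0)) = 0 := by
          intro s hs
          rw [Finset.mem_range] at hs
          have hξz : (if s ≤ n - 1 - d then ξ (n - 1 - d - s) else 0) = 0 := by
            split
            · exact hξ0 _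
            · rfl
          rw [hξz, zero_add]
          by_cases hks : n - 1 - d < s
          · rw [if_pos hks, ih (s - 1 - (n - 1 - d)) (by omega) (by omega), mul_zero]
          · rw [if_neg hks, mul_zero]
        rw [Finset.sum_eq_zero hz, zero_add,
          if_pos (by omega : n - 1 - d < n)] at hk
        have hξz2 : (if n ≤ n - 1 - d then ξ (n - 1 - d - n) else 0) = 0 := by
          split
          · exact hξ0 _
          · rfl
        rw [hξz2, zero_add, show n - 1 - (n - 1 - d) = d from by omega,
          hc, one_mul] at hk
        exact hk
    -- conclude η = 0 from controllability
    have hη : η = 0 := by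
      refine kerL (Matrix.of fun (i j : Fin n) => (A ^ (j : ℕ)).mulVec B i)
        (by simpa using hctrb) η fun j => ?_
      have : ∑ i, η i * (Matrix.of fun (i j : Fin n) => (A ^ (j : ℕ)).mulVec B i) i j
          = η ⬝ᵥ (A ^ (j : ℕ)).mulVec B := rfl
      rw [this]
      exact E2 (j : ℕ) j.isLt
    -- conclude v = 0
    funext r
    cases r with
    | inl i =>
      have := hξ0 (i : ℕ)
      simp only [hξdef] at this
      rw [dif_pos i.isLt, Fin.eta] at this
      exact this
    | inr r => exact congrFun hη r
  rw [key, rankMulLeft P Q hP, hQ]
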